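/- (Reduction Theorem) For any non-negative integer m, natural numbers q ≤ n, and a sequence a : ℕ → ℝ: Σ_{q ≤ N_1 ≤ ... ≤ N_m ≤ n} a(N_m)···a(N_1) = Σ over all tuples (y_1,...,y_m) of non-negative integers with Σ_{i=1}^m i·y_i = m of Π_{i=1}^{m} (1/y_i!) · ((1/i) Σ_{N=q}^{n} a(N)^i)^{y_i}. -/

import Mathlib

/-- Recurrent sum of a single sequence:
`recSum1 a q m n = Σ_{q ≤ N_1 ≤ ⋯ ≤ N_m ≤ n} a N_m ⋯ a N_1`, with order `0` giving `1`. -/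
def recSum1 (a : ℕ → ℝ) (q : ℕ) : ℕ → ℕ → ℝ
  | 0, _ => 1
  | m + 1, n => ∑ N ∈ Finset.Icc q n, a N * recSum1 a q m N

/-!
The recurrent sum `h m = recSum1 a q m n` is the complete homogeneous symmetric polynomial of
degree `m` in `a q, …, a n`, and the right-hand side is its classical expansion
`∑_{λ ⊢ m} p_λ / z_λ` in the power sums `p k = ∑ a N ^ k`. Both sequences satisfy Newton's
identity `m h m = ∑_{k=1}^m p k h (m - k)` and start with `h 0 = 1`, which determines them in
characteristic zero. For the recurrent sums this follows by induction on `n`, adjoining one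
variable at a time. For the partition sum, write `m = ∑ i i y_i` and distribute: removing one part
of size `i` turns `i y_i` times the summand of `y` into `p i` times the summand of `y - e_i`.
-/

open Finset
open scoped Nat

section Newton

variable {R : Type*} [CommRing R]

def NewtonIdentityAt (P H : ℕ → R) (m : ℕ) : Prop :=
  (m + 1 : R) * H (m + 1) = ∑ k ∈ range (m + 1), P (k + 1) * H (m - k)

theorem newtonIdentityAt_pow (x : R) (m : ℕ) : NewtonIdentityAt (x ^ ·) (x ^ ·) m := by
  have hterm : ∀ k ∈ range (m + 1), x ^ (k + 1) * x ^ (m - k) = x ^ (m + 1) := fun k hk => by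
    rw [← pow_add, show k + 1 + (m - k) = m + 1 by have := mem_range.1 hk; omega]
  rw [NewtonIdentityAt, sum_congr rfl hterm, sum_const, card_range, nsmul_eq_mul]
  push_cast
  ring

section Adjoin

variable {H G : ℕ → R} {x : R}

theorem sum_pow_mul_eq_of_rec (hG0 : G 0 = H 0) (hG : ∀ m, G (m + 1) = H (m + 1) + x * G m)
    (m : ℕ) : ∑ k ∈ range (m + 1), x ^ (k + 1) * H (m - k) = x * G m := by
  induction m with
  | zero => simp [hG0]
  | succ m ih =>
    rw [sum_range_succ', hG, mul_add, ← ih, mul_sum, add_comm]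
    congr 1
    · simp
    · exact sum_congr rfl fun k _ => by rw [Nat.add_sub_add_right]; ring

theorem sum_mul_eq_of_rec (hG0 : G 0 = H 0) (hG : ∀ m, G (m + 1) = H (m + 1) + x * G m)
    (Q : ℕ → R) (m : ℕ) :
    ∑ k ∈ range (m + 2), Q (k + 1) * G (m + 1 - k)
      = ∑ k ∈ range (m + 2), Q (k + 1) * H (m + 1 - k)
        + x * ∑ k ∈ range (m + 1), Q (k + 1) * G (m - k) := by
  rw [sum_range_succ, sum_range_succ _ (m + 1), Nat.sub_self, hG0, mul_sum,
    add_right_comm _ (Q _ * H 0), ← sum_add_distrib]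
  congr 1
  refine sum_congr rfl fun k hk => ?_
  rw [show m + 1 - k = m - k + 1 by have := mem_range.1 hk; omega, hG]
  ring

/-- `G` is `H` with one more variable `x`: `∑ G m t^m = (∑ H m t^m) / (1 - x t)`. -/
theorem newtonIdentityAt_of_rec {P : ℕ → R} (hH : ∀ m, NewtonIdentityAt P H m)
    (hG0 : G 0 = H 0) (hG : ∀ m, G (m + 1) = H (m + 1) + x * G m) (m : ℕ) :
    NewtonIdentityAt (fun k => P k + x ^ k) G m := by
  unfold NewtonIdentityAt at hH ⊢
  induction m with
  | zero =>
    have h1 : H 1 = P 1 * H 0 := by simpa using hH 0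
    simp [hG 0, h1, hG0]
    ring
  | succ m ih =>
    calc ((m + 1 : ℕ) + 1 : R) * G (m + 1 + 1)
        = ((m + 1 : ℕ) + 1 : R) * H (m + 1 + 1) + x * ((m + 1 : R) * G (m + 1))
          + x * G (m + 1) := by rw [hG]; push_cast; ring
      _ = ∑ k ∈ range (m + 2), (P (k + 1) + x ^ (k + 1)) * H (m + 1 - k)
          + x * ∑ k ∈ range (m + 1), (P (k + 1) + x ^ (k + 1)) * G (m - k) := by
        rw [hH, ih, ← sum_pow_mul_eq_of_rec hG0 hG]
        simp only [add_mul, sum_add_distrib]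
        ring
      _ = _ := (sum_mul_eq_of_rec hG0 hG (fun k => P k + x ^ k) m).symm

end Adjoin

theorem eq_of_newtonIdentityAt {K : Type*} [Field K] [CharZero K] {P H G : ℕ → K} {M : ℕ}
    (hH : ∀ m < M, NewtonIdentityAt P H m) (hG : ∀ m < M, NewtonIdentityAt P G m)
    (h0 : H 0 = G 0) : ∀ m ≤ M, H m = G m := by
  intro m
  induction m using Nat.strong_induction_on with
  | _ m ih =>
    intro hm
    cases m with
    | zero => exact h0
    | succ m =>
      refine mul_left_cancel₀ (Nat.cast_add_one_ne_zero m) ?_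
      rw [hH m (by omega), hG m (by omega)]
      exact sum_congr rfl fun k _ => by rw [ih (m - k) (by omega) (by omega)]

end Newton

section RecurrentSum

variable (a : ℕ → ℝ) (q : ℕ)

def powerSum (n k : ℕ) : ℝ := ∑ N ∈ Icc q n, a N ^ k

theorem powerSum_self : powerSum a q q = (a q ^ ·) := by
  funext k
  simp [powerSum]

theorem powerSum_succ {n : ℕ} (h : q ≤ n + 1) :
    powerSum a q (n + 1) = fun k => powerSum a q n k + a (n + 1) ^ k := by
  funext k
  rw [powerSum, powerSum, ← insert_Icc_right_eq_Icc_add_one h, sum_insert (by simp), add_comm]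

theorem recSum1_self : (recSum1 a q · q) = (a q ^ ·) := by
  funext m
  induction m with
  | zero => rfl
  | succ m ih => simp [recSum1, ih, pow_succ, mul_comm]

theorem recSum1_succ_succ {n : ℕ} (h : q ≤ n + 1) (m : ℕ) :
    recSum1 a q (m + 1) (n + 1) = recSum1 a q (m + 1) n + a (n + 1) * recSum1 a q m (n + 1) := by
  rw [recSum1, recSum1, ← insert_Icc_right_eq_Icc_add_one h, sum_insert (by simp), add_comm]

theorem newtonIdentityAt_recSum1 {n : ℕ} (hqn : q ≤ n) (m : ℕ) :
    NewtonIdentityAt (powerSum a q n) (recSum1 a q · n) m := by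
  induction n, hqn using Nat.le_induction generalizing m with
  | base =>
    rw [powerSum_self, recSum1_self]
    exact newtonIdentityAt_pow (a q) m
  | succ n hn ih =>
    rw [powerSum_succ a q (by omega)]
    exact newtonIdentityAt_of_rec ih rfl (recSum1_succ_succ a q (by omega)) m

end RecurrentSum

section PartitionSum

variable {M : ℕ}

/-- `y j` is the number of parts of size `j + 1`, so `tupleWeight y` is the size of the
partition that `y` encodes. -/
def tupleWeight (y : Fin M → ℕ) : ℕ := ∑ j, (j.1 + 1) * y j

theorem tupleWeight_add (y z : Fin M → ℕ) :
    tupleWeight (y + z) = tupleWeight y + tupleWeight z := by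
  simp [tupleWeight, mul_add, sum_add_distrib]

theorem tupleWeight_single (i : Fin M) (c : ℕ) :
    tupleWeight (Pi.single i c) = (i.1 + 1) * c := by
  simp [tupleWeight, Pi.single_apply]

theorem mul_apply_le_tupleWeight (y : Fin M → ℕ) (j : Fin M) :
    (j.1 + 1) * y j ≤ tupleWeight y :=
  single_le_sum (f := fun j : Fin M => (j.1 + 1) * y j) (fun _ _ => Nat.zero_le _) (mem_univ j)

def tuplesOfWeight (M m : ℕ) : Finset (Fin M → ℕ) :=
  {y ∈ Fintype.piFinset fun _ => range (m + 1) | tupleWeight y = m}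

theorem mem_tuplesOfWeight {m : ℕ} {y : Fin M → ℕ} :
    y ∈ tuplesOfWeight M m ↔ tupleWeight y = m := by
  refine ⟨fun h => (mem_filter.1 h).2,
    fun h => mem_filter.2 ⟨Fintype.mem_piFinset.2 fun j => ?_, h⟩⟩
  rw [mem_range, Nat.lt_succ_iff, ← h]
  exact (Nat.le_mul_of_pos_left _ j.1.succ_pos).trans (mul_apply_le_tupleWeight y j)

theorem tuplesOfWeight_zero (M : ℕ) : tuplesOfWeight M 0 = {0} := by
  ext y
  simp [mem_tuplesOfWeight, tupleWeight, sum_eq_zero_iff, funext_iff]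

theorem apply_eq_zero_of_mem_tuplesOfWeight {m : ℕ} {y : Fin M → ℕ}
    (hy : y ∈ tuplesOfWeight M m) {i : Fin M} (hi : m < i.1 + 1) : y i = 0 := by
  have := mul_apply_le_tupleWeight y i
  rw [mem_tuplesOfWeight.1 hy] at this
  have : y i < 1 := Nat.lt_of_mul_lt_mul_left (a := i.1 + 1) (by omega)
  omega

variable {K : Type*} [Field K]

def expTerm (u : K) (c : ℕ) : K := 1 / (c ! : K) * u ^ c

theorem succ_mul_expTerm_succ [CharZero K] (u : K) (c : ℕ) :
    (c + 1 : K) * expTerm u (c + 1) = u * expTerm u c := by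
  have : (c ! : K) ≠ 0 := Nat.cast_ne_zero.2 c.factorial_ne_zero
  simp only [expTerm, Nat.factorial_succ, Nat.cast_mul, pow_succ]
  push_cast
  field_simp

/-- The term `p_λ / z_λ` of the partition `λ` encoded by `y`, where `w k` plays the role of the
power sum `p k`. -/
def partitionTerm (w : ℕ → K) (y : Fin M → ℕ) : K :=
  ∏ j : Fin M, expTerm ((1 / (j.1 + 1 : K)) * w (j.1 + 1)) (y j)

def partitionSum (w : ℕ → K) (M m : ℕ) : K :=
  ∑ y ∈ tuplesOfWeight M m, partitionTerm w y

theorem partitionSum_zero (w : ℕ → K) (M : ℕ) : partitionSum w M 0 = 1 := by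
  simp [partitionSum, partitionTerm, tuplesOfWeight_zero, expTerm]

theorem partitionTerm_add_single [CharZero K] (w : ℕ → K) (i : Fin M) (y : Fin M → ℕ) :
    (i.1 + 1 : K) * (y + Pi.single i 1 : Fin M → ℕ) i * partitionTerm w (y + Pi.single i 1)
      = w (i.1 + 1) * partitionTerm w y := by
  have hcompl : ∀ j ∈ ({i}ᶜ : Finset (Fin M)), (y + Pi.single i 1 : Fin M → ℕ) j = y j :=
    fun j hj => by simp [show j ≠ i by simpa using hj]
  rw [partitionTerm, partitionTerm, Fintype.prod_eq_mul_prod_compl i,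
    Fintype.prod_eq_mul_prod_compl i, prod_congr rfl fun j hj => congrArg _ (hcompl j hj)]
  simp only [Pi.add_apply, Pi.single_eq_same, Nat.cast_add, Nat.cast_one]
  rw [← mul_assoc, mul_assoc _ _ (expTerm _ _), succ_mul_expTerm_succ]
  have : (i.1 + 1 : K) ≠ 0 := Nat.cast_add_one_ne_zero i.1
  field_simp

theorem sum_mul_apply_mul_partitionTerm [CharZero K] (w : ℕ → K) (i : Fin M) (n : ℕ) :
    ∑ y ∈ tuplesOfWeight M (n + (i.1 + 1)), (i.1 + 1 : K) * y i * partitionTerm w y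
      = w (i.1 + 1) * partitionSum w M n := by
  classical
  set e : Fin M → ℕ := Pi.single i 1
  have he : ∀ y : Fin M → ℕ, y i ≠ 0 → e ≤ y := fun y hy j => by
    by_cases hj : j = i
    · subst hj; simp [e]; omega
    · simp [e, hj]
  rw [← sum_filter_of_ne (p := fun y => y i ≠ 0) fun y _ hy h => hy (by simp [h]),
    partitionSum, mul_sum]
  symm
  refine sum_nbij' (· + e) (· - e) (fun y hy => ?_) (fun y hy => ?_)
    (fun y _ => add_tsub_cancel_right y e) (fun y hy => tsub_add_cancel_of_le (he y ?_))
    (fun y _ => (partitionTerm_add_single w i y).symm)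
  · rw [mem_filter, mem_tuplesOfWeight, tupleWeight_add, tupleWeight_single,
      mem_tuplesOfWeight.1 hy]
    simp [e]
  · obtain ⟨hy, hyi⟩ := mem_filter.1 hy
    rw [mem_tuplesOfWeight] at hy ⊢
    have := tupleWeight_add (y - e) e
    rw [tsub_add_cancel_of_le (he y hyi), tupleWeight_single, hy] at this
    omega
  · exact (mem_filter.1 hy).2

theorem newtonIdentityAt_partitionSum [CharZero K] (w : ℕ → K) {m : ℕ} (hm : m < M) :
    NewtonIdentityAt w (partitionSum w M) m := by
  have hpart : ∀ i : Fin M,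
      ∑ y ∈ tuplesOfWeight M (m + 1), (i.1 + 1 : K) * y i * partitionTerm w y
        = if i.1 ≤ m then w (i.1 + 1) * partitionSum w M (m - i.1) else 0 := fun i => by
    split_ifs with hi
    · rw [show m + 1 = m - i.1 + (i.1 + 1) by omega]
      exact sum_mul_apply_mul_partitionTerm w i _
    · exact sum_eq_zero fun y hy => by
        rw [apply_eq_zero_of_mem_tuplesOfWeight hy (by omega)]
        simp
  calc (m + 1 : K) * partitionSum w M (m + 1)
      = ∑ y ∈ tuplesOfWeight M (m + 1),
          ∑ i : Fin M, (i.1 + 1 : K) * y i * partitionTerm w y := by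
        rw [partitionSum, mul_sum]
        refine sum_congr rfl fun y hy => ?_
        rw [← sum_mul]
        congr 1
        have := congrArg (Nat.cast (R := K)) (mem_tuplesOfWeight.1 hy)
        push_cast [tupleWeight] at this
        exact this.symm
    _ = ∑ i : Fin M, if i.1 ≤ m then w (i.1 + 1) * partitionSum w M (m - i.1) else 0 := by
        rw [sum_comm]
        exact sum_congr rfl fun i _ => hpart i
    _ = ∑ k ∈ range (m + 1), w (k + 1) * partitionSum w M (m - k) := by
        rw [Fin.sum_univ_eq_sum_range
          (fun k => if k ≤ m then w (k + 1) * partitionSum w M (m - k) else 0), ← sum_filter,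
          show {k ∈ range M | k ≤ m} = range (m + 1) by ext; simp; omega]

end PartitionSum

theorem recSum1_eq_partitionSum (a : ℕ → ℝ) {q n : ℕ} (hqn : q ≤ n) (m : ℕ) :
    recSum1 a q m n = partitionSum (powerSum a q n) m m :=
  eq_of_newtonIdentityAt (fun k _ => newtonIdentityAt_recSum1 a q hqn k)
    (fun _ hk => newtonIdentityAt_partitionSum _ hk) (partitionSum_zero _ _).symm m le_rfl

theorem stmt_12 (m q n : ℕ) (hqn : q ≤ n) (a : ℕ → ℝ) :
    recSum1 a q m n
      = ∑ᶠ y ∈ {y : Fin m → ℕ | ∑ i, (i.1 + 1) * y i = m},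
          ∏ i : Fin m,
            (1 / (Nat.factorial (y i) : ℝ))
              * ((1 / (i.1 + 1 : ℝ)) * ∑ N ∈ Finset.Icc q n, (a N) ^ (i.1 + 1)) ^ (y i) := by
  have hset : {y : Fin m → ℕ | ∑ i, (i.1 + 1) * y i = m} = ↑(tuplesOfWeight m m) := by
    ext y
    simp [mem_tuplesOfWeight, tupleWeight]
  rw [hset, finsum_mem_coe_finset]
  exact recSum1_eq_partitionSum a hqn m
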